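/- Let n ≥ 2, κ₀ > 0, ℓ > 0, η₁, η₂ ∈ ℝ, let Q ⊂ ℝ^{n−1} be a bounded open set, and let κ₁, …, κ_{n−1} : Q → ℝ be C¹ functions with |κ_j(s)| ≤ κ₀ and |∂κ_j/∂s_i(s)| ≤ κ₀ for all s ∈ Q and all i, j. Let W : ℝ → ℝ be C¹ with W(0) = 0, and let U : ℝ → ℝ be C² with support contained in (−ℓ, ℓ), satisfying the bilayer profile equation U''(z) = W'(U(z)) for all z ∈ ℝ. Define u : ℝ^{n−1}×ℝ → ℝ by u(s, z) := U(z), and set a := (1/2)·∫_{−ℓ}^{ℓ} U'(z)² dz, b := ∫_{−ℓ}^{ℓ} W(U(z)) dz. Then a = b and lim_{ε→0⁺} F̃_ε^ℓ(u) = a·∫_Q H₀(s)² ds − (η₁ + η₂)·b·|Q|, where H₀(s) := Σ_{j=1}^{n−1} κ_j(s) and |Q| is the Lebesgue measure of Q. -/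

import Mathlib

open MeasureTheory Filter intervalIntegral

/-- Tangential partial derivative `∂u/∂s_j` in the product coordinates `(s, z)`. -/
noncomputable def pds {m : ℕ} (j : Fin m) (u : (Fin m → ℝ) × ℝ → ℝ)
    (x : (Fin m → ℝ) × ℝ) : ℝ :=
  fderiv ℝ u x (Pi.single j 1, 0)

/-- Normal partial derivative `∂u/∂z` in the product coordinates `(s, z)`. -/
noncomputable def pdz {m : ℕ} (u : (Fin m → ℝ) × ℝ → ℝ) (x : (Fin m → ℝ) × ℝ) : ℝ :=
  fderiv ℝ u x (0, 1)

/-- The squared scaled gradient `|D̃u|²`. -/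
noncomputable def DtilSq {m : ℕ} (ε : ℝ) (κ : Fin m → (Fin m → ℝ) → ℝ)
    (u : (Fin m → ℝ) × ℝ → ℝ) (x : (Fin m → ℝ) × ℝ) : ℝ :=
  (∑ j, ((1 + ε * x.2 * κ j x.1)⁻¹) ^ 2 * (pds j u x) ^ 2) + (ε⁻¹) ^ 2 * (pdz u x) ^ 2

/-- The scaled Laplacian `Δ̃u` in the curvilinear coordinates `(s, z)`. -/
noncomputable def lapTil {m : ℕ} (ε : ℝ) (κ : Fin m → (Fin m → ℝ) → ℝ)
    (u : (Fin m → ℝ) × ℝ → ℝ) (x : (Fin m → ℝ) × ℝ) : ℝ :=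
  (∑ j, ((1 + ε * x.2 * κ j x.1)⁻¹) ^ 2 * pds j (fun y => pds j u y) x)
    + ε⁻¹ * ∑ j, κ j x.1 * (1 + ε * x.2 * κ j x.1)⁻¹ * pdz u x
    + (ε⁻¹) ^ 2 * pdz (fun y => pdz u y) x
    - ε * ∑ j, (fderiv ℝ (κ j) x.1 (Pi.single j 1)) * ((1 + ε * x.2 * κ j x.1)⁻¹) ^ 3 * pds j u x

/-- The rescaled Functionalized Cahn–Hilliard energy `F̃_ε^ℓ` over `Q × (−ℓ, ℓ)`,
with Jacobian `J(s,z) = Π_j (1 + ε z κ_j(s))`. -/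
noncomputable def Ftil {m : ℕ} (ε η₁ η₂ ℓ : ℝ) (κ : Fin m → (Fin m → ℝ) → ℝ)
    (W : ℝ → ℝ) (Q : Set (Fin m → ℝ)) (u : (Fin m → ℝ) × ℝ → ℝ) : ℝ :=
  ∫ x in Q ×ˢ Set.Ioo (-ℓ) ℓ,
    ((1 / 2) * (-(ε * lapTil ε κ u x) + ε⁻¹ * deriv W (u x)) ^ 2
      - (η₁ * ε ^ 2 / 2) * DtilSq ε κ u x - η₂ * W (u x))
      * (∏ j, (1 + ε * x.2 * κ j x.1))

/-!
For `u(s, z) = U(z)` all tangential derivatives vanish, so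
`Δ̃u = ε⁻¹ H_ε U' + ε⁻² U''` with `H_ε = Σ_j κ_j / (1 + ε z κ_j)`, and the profile equation
cancels the singular terms: `-ε Δ̃u + ε⁻¹ W'(U) = -H_ε U'`. Multiplying the profile equation by
`U'` shows that `U'²/2 - W(U)` is constant, hence zero since `U` vanishes outside `(-ℓ, ℓ)`;
this equipartition gives `a = b` and turns the integrand into `(H_ε² - η₁ - η₂) (U'²/2) J`.
For `|ε| ℓ κ₀ ≤ 1/2` this is bounded uniformly on `Q × (-ℓ, ℓ)`, so dominated convergence
applies, and the limit `(H₀² - η₁ - η₂) U'²/2` has separated variables.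
-/

open Topology

section FlatProfile

variable {m : ℕ} {U : ℝ → ℝ}

lemma fderiv_comp_snd_apply (hU : Differentiable ℝ U) (x : (Fin m → ℝ) × ℝ)
    (v : (Fin m → ℝ) × ℝ) :
    fderiv ℝ (fun p : (Fin m → ℝ) × ℝ => U p.2) x v = deriv U x.2 * v.2 := by
  have h : HasFDerivAt (fun p : (Fin m → ℝ) × ℝ => U p.2)
      (deriv U x.2 • ContinuousLinearMap.snd ℝ (Fin m → ℝ) ℝ) x :=
    (hU x.2).hasDerivAt.comp_hasFDerivAt x hasFDerivAt_snd
  simp [h.fderiv, mul_comm]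

lemma pds_comp_snd (hU : Differentiable ℝ U) (j : Fin m) :
    pds j (fun p : (Fin m → ℝ) × ℝ => U p.2) = 0 := by
  ext x
  simp [pds, fderiv_comp_snd_apply hU]

lemma pdz_comp_snd (hU : Differentiable ℝ U) :
    pdz (fun p : (Fin m → ℝ) × ℝ => U p.2) = fun p => deriv U p.2 := by
  ext x
  simp [pdz, fderiv_comp_snd_apply hU]

end FlatProfile

section Curvature

variable {m : ℕ} (κ : Fin m → (Fin m → ℝ) → ℝ)

/-- The paper's `H_ε(s, z)`, written in terms of `t = ε z`. -/
noncomputable def curvatureSum (t : ℝ) (s : Fin m → ℝ) : ℝ :=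
  ∑ j, κ j s * (1 + t * κ j s)⁻¹

def jacobian (t : ℝ) (s : Fin m → ℝ) : ℝ :=
  ∏ j, (1 + t * κ j s)

@[simp] lemma curvatureSum_zero (s : Fin m → ℝ) : curvatureSum κ 0 s = ∑ j, κ j s := by
  simp [curvatureSum]

@[simp] lemma jacobian_zero (s : Fin m → ℝ) : jacobian κ 0 s = 1 := by
  simp [jacobian]

variable {κ}

lemma abs_inv_one_add_le_two {a : ℝ} (ha : |a| ≤ 1 / 2) : |(1 + a)⁻¹| ≤ 2 := by
  have h : 1 / 2 ≤ 1 + a := by linarith [neg_abs_le a]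
  rw [abs_inv, abs_of_pos (by linarith)]
  calc (1 + a)⁻¹ ≤ (1 / 2)⁻¹ := inv_anti₀ (by norm_num) h
    _ = 2 := by norm_num

lemma abs_curvatureSum_le {κ₀ t : ℝ} {s : Fin m → ℝ} (hκ : ∀ j, |κ j s| ≤ κ₀)
    (ht : ∀ j, |t * κ j s| ≤ 1 / 2) : |curvatureSum κ t s| ≤ m * (2 * κ₀) := by
  calc |curvatureSum κ t s| ≤ ∑ j, |κ j s * (1 + t * κ j s)⁻¹| := Finset.abs_sum_le_sum_abs _ _
    _ ≤ ∑ _j : Fin m, κ₀ * 2 := by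
      gcongr with j
      rw [abs_mul]
      exact mul_le_mul (hκ j) (abs_inv_one_add_le_two (ht j)) (abs_nonneg _)
        ((abs_nonneg _).trans (hκ j))
    _ = m * (2 * κ₀) := by simp [mul_comm]

lemma abs_jacobian_le {t : ℝ} {s : Fin m → ℝ} (ht : ∀ j, |t * κ j s| ≤ 1 / 2) :
    |jacobian κ t s| ≤ 2 ^ m := by
  rw [jacobian, Finset.abs_prod]
  calc ∏ j, |1 + t * κ j s| ≤ ∏ _j : Fin m, (2 : ℝ) := by
        gcongr with j
        linarith [abs_add_le 1 (t * κ j s), ht j, abs_one (α := ℝ)]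
    _ = 2 ^ m := by simp

end Curvature

section Energy

variable {m : ℕ} {κ : Fin m → (Fin m → ℝ) → ℝ} {U : ℝ → ℝ}

lemma lapTil_comp_snd (hU : Differentiable ℝ U) (hU' : Differentiable ℝ (deriv U)) (ε : ℝ)
    (x : (Fin m → ℝ) × ℝ) :
    lapTil ε κ (fun p => U p.2) x
      = ε⁻¹ * curvatureSum κ (ε * x.2) x.1 * deriv U x.2 + (ε⁻¹) ^ 2 * deriv (deriv U) x.2 := by
  simp only [lapTil, pds_comp_snd hU, pdz_comp_snd hU, pdz_comp_snd hU', curvatureSum,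
    Pi.zero_apply]
  simp [pds, Finset.sum_mul, mul_assoc]

lemma DtilSq_comp_snd (hU : Differentiable ℝ U) (ε : ℝ) (x : (Fin m → ℝ) × ℝ) :
    DtilSq ε κ (fun p => U p.2) x = (ε⁻¹) ^ 2 * deriv U x.2 ^ 2 := by
  simp [DtilSq, pds_comp_snd hU, pdz_comp_snd hU]

variable (κ) in
noncomputable def bilayerDensity (η : ℝ) (V : ℝ → ℝ) (ε : ℝ) (x : (Fin m → ℝ) × ℝ) : ℝ :=
  (curvatureSum κ (ε * x.2) x.1 ^ 2 - η) * (V x.2 ^ 2 / 2) * jacobian κ (ε * x.2) x.1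

lemma Ftil_comp_snd {ε : ℝ} (hε : ε ≠ 0) (η₁ η₂ ℓ : ℝ) {W : ℝ → ℝ} (Q : Set (Fin m → ℝ))
    (hU : Differentiable ℝ U) (hU' : Differentiable ℝ (deriv U))
    (hODE : ∀ z, deriv (deriv U) z = deriv W (U z))
    (hW : ∀ z, W (U z) = deriv U z ^ 2 / 2) :
    Ftil ε η₁ η₂ ℓ κ W Q (fun p => U p.2)
      = ∫ x in Q ×ˢ Set.Ioo (-ℓ) ℓ, bilayerDensity κ (η₁ + η₂) (deriv U) ε x := by
  refine integral_congr_ae (ae_of_all _ fun x => ?_)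
  simp only [lapTil_comp_snd hU hU', DtilSq_comp_snd hU, hODE, hW, bilayerDensity, jacobian]
  field_simp
  ring

end Energy

theorem comp_eq_sq_deriv_div_two_of_deriv_deriv_eq {U W : ℝ → ℝ} (hU : Differentiable ℝ U)
    (hU' : Differentiable ℝ (deriv U)) (hW : Differentiable ℝ W)
    (hODE : ∀ z, deriv (deriv U) z = deriv W (U z)) (hW0 : W 0 = 0) {z₀ : ℝ}
    (hz₀ : U =ᶠ[𝓝 z₀] 0) (z : ℝ) : W (U z) = deriv U z ^ 2 / 2 := by
  set E := fun z => deriv U z ^ 2 / 2 - W (U z)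
  have hE : ∀ z, HasDerivAt E 0 z := fun z => by
    refine ((((hU' z).hasDerivAt.pow 2).div_const 2).sub
      ((hW (U z)).hasDerivAt.comp z (hU z).hasDerivAt)).congr_deriv ?_
    rw [hODE]
    ring
  have hEz₀ : E z₀ = 0 := by
    simp [E, hz₀.eq_of_nhds, hz₀.deriv_eq, hW0]
  have := is_const_of_deriv_eq_zero (fun z => (hE z).differentiableAt) (fun z => (hE z).deriv) z z₀
  simp only [E] at this hEz₀
  linarith

section Limit

variable {m : ℕ} {κ : Fin m → (Fin m → ℝ) → ℝ}

lemma abs_bilayerDensity_le {κ₀ M η ε : ℝ} {V : ℝ → ℝ} {x : (Fin m → ℝ) × ℝ}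
    (hκ : ∀ j, |κ j x.1| ≤ κ₀) (hsmall : ∀ j, |ε * x.2 * κ j x.1| ≤ 1 / 2) (hV : |V x.2| ≤ M) :
    |bilayerDensity κ η V ε x| ≤ ((m * (2 * κ₀)) ^ 2 + |η|) * (M ^ 2 / 2) * 2 ^ m := by
  have hH : |curvatureSum κ (ε * x.2) x.1 ^ 2 - η| ≤ (m * (2 * κ₀)) ^ 2 + |η| := by
    calc _ ≤ |curvatureSum κ (ε * x.2) x.1| ^ 2 + |η| := by
          rw [← abs_pow]; exact abs_sub _ _
      _ ≤ _ := by gcongr; exact abs_curvatureSum_le hκ hsmall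
  rw [bilayerDensity, abs_mul, abs_mul, abs_div, abs_pow, abs_two]
  gcongr
  exact abs_jacobian_le hsmall

lemma tendsto_integral_bilayerDensity {κ₀ : ℝ} (η ℓ : ℝ) {Q : Set (Fin m → ℝ)}
    (hQ : MeasurableSet Q) (hQfin : volume Q ≠ ⊤) (hκ : ∀ j, Continuous (κ j))
    (hκb : ∀ j, ∀ s ∈ Q, |κ j s| ≤ κ₀) {V : ℝ → ℝ} (hV : Continuous V) :
    Tendsto (fun ε => ∫ x in Q ×ˢ Set.Ioo (-ℓ) ℓ, bilayerDensity κ η V ε x) (𝓝 0)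
      (𝓝 (∫ x in Q ×ˢ Set.Ioo (-ℓ) ℓ, bilayerDensity κ η V 0 x)) := by
  obtain ⟨M, hM⟩ :=
    (isCompact_Icc (a := -ℓ) (b := ℓ)).exists_bound_of_continuousOn hV.continuousOn
  have hsmall : ∀ᶠ ε : ℝ in 𝓝 0, |ε| * ℓ * κ₀ ≤ 1 / 2 :=
    (Continuous.tendsto' (by fun_prop) 0 0 (by simp)).eventually_le_const (by norm_num)
  have hκ_meas := fun j => (hκ j).measurable
  refine tendsto_integral_filter_of_dominated_convergence
    (fun _ => ((m * (2 * κ₀)) ^ 2 + |η|) * (M ^ 2 / 2) * 2 ^ m)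
    (Eventually.of_forall fun ε => by unfold bilayerDensity curvatureSum jacobian; fun_prop)
    (hsmall.mono fun ε hε => ?_) ?_ (ae_of_all _ fun x => ?_)
  · rw [ae_restrict_iff' (hQ.prod measurableSet_Ioo)]
    refine ae_of_all _ fun x ⟨hs, hz⟩ => abs_bilayerDensity_le (hκb · x.1 hs) (fun j => ?_)
      (hM x.2 (Set.Ioo_subset_Icc_self hz))
    have hz' : |x.2| ≤ ℓ := abs_le.2 ⟨hz.1.le, hz.2.le⟩
    calc |ε * x.2 * κ j x.1| = |ε| * |x.2| * |κ j x.1| := by rw [abs_mul, abs_mul]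
      _ ≤ |ε| * ℓ * κ₀ := by
        gcongr
        · exact mul_nonneg (abs_nonneg _) ((abs_nonneg _).trans hz')
        · exact hκb j x.1 hs
      _ ≤ 1 / 2 := hε
  · refine integrableOn_const ?_
    rw [Measure.volume_eq_prod, Measure.prod_prod]
    exact ENNReal.mul_ne_top hQfin measure_Ioo_lt_top.ne
  · unfold bilayerDensity curvatureSum jacobian
    exact ContinuousAt.tendsto (by fun_prop (disch := simp))

lemma integral_bilayerDensity_zero (η ℓ : ℝ) (Q : Set (Fin m → ℝ)) (V : ℝ → ℝ) :
    ∫ x in Q ×ˢ Set.Ioo (-ℓ) ℓ, bilayerDensity κ η V 0 x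
      = (∫ s in Q, ((∑ j, κ j s) ^ 2 - η)) * ∫ z in Set.Ioo (-ℓ) ℓ, V z ^ 2 / 2 := by
  simp only [bilayerDensity, zero_mul, curvatureSum_zero, jacobian_zero, mul_one]
  rw [Measure.volume_eq_prod]
  exact setIntegral_prod_mul (fun s => (∑ j, κ j s) ^ 2 - η) (fun z => V z ^ 2 / 2) Q _

end Limit

theorem stmt_17_general (n : ℕ) (κ₀ ℓ : ℝ) (hℓ : 0 < ℓ)
    (η₁ η₂ : ℝ)
    (Q : Set (Fin (n - 1) → ℝ)) (hQo : IsOpen Q) (hQb : Bornology.IsBounded Q)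
    (κ : Fin (n - 1) → (Fin (n - 1) → ℝ) → ℝ) (hκ : ∀ j, ContDiff ℝ 1 (κ j))
    (hκb : ∀ j, ∀ s ∈ Q, |κ j s| ≤ κ₀)
    (W : ℝ → ℝ) (hW : ContDiff ℝ 1 W) (hW0 : W 0 = 0)
    (U : ℝ → ℝ) (hU : ContDiff ℝ 2 U)
    (hUsupp : Function.support U ⊆ Set.Ioo (-ℓ) ℓ)
    (hODE : ∀ z : ℝ, deriv (deriv U) z = deriv W (U z)) :
    (1 / 2) * (∫ z in (-ℓ)..ℓ, (deriv U z) ^ 2) = (∫ z in (-ℓ)..ℓ, W (U z)) ∧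
    Tendsto (fun ε => Ftil ε η₁ η₂ ℓ κ W Q (fun x => U x.2))
      (nhdsWithin 0 (Set.Ioi (0 : ℝ)))
      (nhds (((1 / 2) * ∫ z in (-ℓ)..ℓ, (deriv U z) ^ 2)
          * (∫ s in Q, (∑ j, κ j s) ^ 2)
        - (η₁ + η₂) * (∫ z in (-ℓ)..ℓ, W (U z)) * (volume Q).toReal)) := by
  have hUd : Differentiable ℝ U := hU.differentiable (by norm_num)
  have hU'd : Differentiable ℝ (deriv U) := hU.differentiable_deriv_two
  have hU0 : U =ᶠ[𝓝 (-ℓ - 1)] 0 := notMem_tsupport_iff_eventuallyEq.mp fun h =>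
    by linarith [(closure_minimal (hUsupp.trans Set.Ioo_subset_Icc_self) isClosed_Icc h).1]
  have hequi := comp_eq_sq_deriv_div_two_of_deriv_deriv_eq hUd hU'd
    (hW.differentiable one_ne_zero) hODE hW0 hU0
  have hIoo (f : ℝ → ℝ) : ∫ z in (-ℓ)..ℓ, f z = ∫ z in Set.Ioo (-ℓ) ℓ, f z := by
    rw [integral_of_le (neg_le_self hℓ.le), integral_Ioc_eq_integral_Ioo]
  have ha : 1 / 2 * ∫ z in (-ℓ)..ℓ, deriv U z ^ 2 = ∫ z in Set.Ioo (-ℓ) ℓ, deriv U z ^ 2 / 2 := by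
    rw [hIoo, MeasureTheory.integral_div]
    ring
  have hb : ∫ z in (-ℓ)..ℓ, W (U z) = ∫ z in Set.Ioo (-ℓ) ℓ, deriv U z ^ 2 / 2 := by
    simp only [hequi, hIoo]
  have hH : IntegrableOn (fun s => (∑ j, κ j s) ^ 2) Q := by
    refine ContinuousOn.integrableOn_compact hQb.isCompact_closure ?_ |>.mono_set subset_closure
    exact Continuous.continuousOn (by fun_prop)
  have hlim := tendsto_integral_bilayerDensity (η₁ + η₂) ℓ hQo.measurableSet
    hQb.measure_lt_top.ne (fun j => (hκ j).continuous) hκb hU'd.continuous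
  have hF : (fun ε => ∫ x in Q ×ˢ Set.Ioo (-ℓ) ℓ, bilayerDensity κ (η₁ + η₂) (deriv U) ε x)
      =ᶠ[𝓝[>] 0] fun ε => Ftil ε η₁ η₂ ℓ κ W Q (fun x => U x.2) :=
    eventually_mem_nhdsWithin.mono fun ε hε =>
      (Ftil_comp_snd hε.ne' η₁ η₂ ℓ Q hUd hU'd hODE hequi).symm
  refine ⟨ha.trans hb.symm, ?_⟩
  convert (hlim.mono_left nhdsWithin_le_nhds).congr' hF using 2
  rw [integral_bilayerDensity_zero, integral_sub hH (integrableOn_const hQb.measure_lt_top.ne),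
    setIntegral_const, smul_eq_mul, measureReal_def, ha, hb]
  ring

/-- for the flat bilayer configuration `u(s,z) = U(z)`, the rescaled FCH
energy converges as `ε → 0⁺` to the codimension-one energy
`a·∫_Q H₀² ds − (η₁+η₂)·b·|Q|`, with `a = b`. -/
theorem stmt_17 (n : ℕ) (hn : 2 ≤ n) (κ₀ ℓ : ℝ) (hκ₀ : 0 < κ₀) (hℓ : 0 < ℓ)
    (η₁ η₂ : ℝ)
    (Q : Set (Fin (n - 1) → ℝ)) (hQo : IsOpen Q) (hQb : Bornology.IsBounded Q)
    (κ : Fin (n - 1) → (Fin (n - 1) → ℝ) → ℝ) (hκ : ∀ j, ContDiff ℝ 1 (κ j))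
    (hκb : ∀ j, ∀ s ∈ Q, |κ j s| ≤ κ₀)
    (hκ'b : ∀ i j, ∀ s ∈ Q, |fderiv ℝ (κ j) s (Pi.single i 1)| ≤ κ₀)
    (W : ℝ → ℝ) (hW : ContDiff ℝ 1 W) (hW0 : W 0 = 0)
    (U : ℝ → ℝ) (hU : ContDiff ℝ 2 U)
    (hUsupp : Function.support U ⊆ Set.Ioo (-ℓ) ℓ)
    (hODE : ∀ z : ℝ, deriv (deriv U) z = deriv W (U z)) :
    (1 / 2) * (∫ z in (-ℓ)..ℓ, (deriv U z) ^ 2) = (∫ z in (-ℓ)..ℓ, W (U z)) ∧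
    Tendsto (fun ε => Ftil ε η₁ η₂ ℓ κ W Q (fun x => U x.2))
      (nhdsWithin 0 (Set.Ioi (0 : ℝ)))
      (nhds (((1 / 2) * ∫ z in (-ℓ)..ℓ, (deriv U z) ^ 2)
          * (∫ s in Q, (∑ j, κ j s) ^ 2)
        - (η₁ + η₂) * (∫ z in (-ℓ)..ℓ, W (U z)) * (volume Q).toReal)) :=
  stmt_17_general n κ₀ ℓ hℓ η₁ η₂ Q hQo hQb κ hκ hκb W hW hW0 U hU hUsupp hODE
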